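/- With V, g, P, π, ω, Ric, Ric⁰ and r, r⁰ as in the pointwise model, the manifold is of Einstein type of the zeroth kind if and only if it is quasi-Einstein with Ricci tensor Ric = (1/(4n))·(4r − (n−1)·π(P))·g + ((n−1)/4)·(π⊗π); that is, Ric⁰ = (r⁰/n)·g holds if and only if Ric = (1/(4n))·(4r − (n−1)·π(P))·g + ((n−1)/4)·(π⊗π). -/

import Mathlib

/-!
Taking the `g`-trace of the definition of `Ric⁰`, with `tr_g g = n` and `tr_g (π ⊗ π) = π(P)`,
expresses `r⁰` through `r`, `ω` and `π(P)`. Substituting this into `Ric⁰ = (r⁰/n) g` and moving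
the `g`- and `π ⊗ π`-terms of `Ric⁰` to the other side, the `ω`-terms cancel and what remains is
exactly the stated quasi-Einstein form of `Ric`.
-/

/-- The `g`-trace of a bilinear form `B`: the trace of the endomorphism
`(g♭)⁻¹ ∘ B♭` of `V`, where `B♭ : V → V*` is `X ↦ B(X,·)`. -/
noncomputable def trG {V : Type*} [AddCommGroup V] [Module ℝ V] [FiniteDimensional ℝ V]
    (g : LinearMap.BilinForm ℝ V) (hg : g.Nondegenerate)
    (B : LinearMap.BilinForm ℝ V) : ℝ :=
  LinearMap.trace ℝ V ((g.toDual hg).symm.toLinearMap ∘ₗ B)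

section Trace

variable {V : Type*} [AddCommGroup V] [Module ℝ V] [FiniteDimensional ℝ V]
  (g : LinearMap.BilinForm ℝ V) (hg : g.Nondegenerate)

lemma trG_smul (a : ℝ) (B : LinearMap.BilinForm ℝ V) :
    trG g hg (a • B) = a * trG g hg B := by
  simp [trG, LinearMap.comp_smul]

lemma trG_sub (B C : LinearMap.BilinForm ℝ V) :
    trG g hg (B - C) = trG g hg B - trG g hg C := by
  simp [trG, LinearMap.comp_sub]

lemma trG_self : trG g hg g = Module.finrank ℝ V := by
  have h : (g.toDual hg).symm.toLinearMap ∘ₗ g = LinearMap.id :=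
    LinearMap.ext (g.toDual hg).symm_apply_apply
  rw [trG, h, LinearMap.trace_id]

lemma trG_smulRight (φ : V →ₗ[ℝ] ℝ) (P : V) :
    trG g hg (φ.smulRight (g P)) = φ P := by
  have h : (g.toDual hg).symm.toLinearMap ∘ₗ φ.smulRight (g P) = dualTensorHom ℝ V V (φ ⊗ₜ P) := by
    ext x
    have hP : (g.toDual hg).symm (g P) = P := (g.toDual hg).symm_apply_apply P
    simp [hP]
  rw [trG, h, LinearMap.trace_eq_contract_apply]
  simp

end Trace

lemma sub_smul_sub_smul_eq_smul_iff {R M : Type*} [Ring R] [AddCommGroup M] [Module R M]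
    (x u v : M) (a b c : R) :
    x - a • u - b • v = c • u ↔ x = (c + a) • u + b • v := by
  rw [sub_sub, sub_eq_iff_eq_add, add_smul, add_assoc]

theorem stmt_4_general {V : Type*} [AddCommGroup V] [Module ℝ V] [FiniteDimensional ℝ V]
    (n : ℕ) (hn : 3 ≤ n) (hdim : Module.finrank ℝ V = n)
    (g : LinearMap.BilinForm ℝ V) (hg : g.Nondegenerate) (hgs : g.IsSymm)
    (P : V) (π : V →ₗ[ℝ] ℝ) (hπ : π = g.flip P) (ω : ℝ)
    (ππ : LinearMap.BilinForm ℝ V) (hππ : ππ = π.smulRight π)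
    (Ric : LinearMap.BilinForm ℝ V)
    (Ric0 : LinearMap.BilinForm ℝ V)
    (hRic0 : Ric0 = Ric - ((((n : ℝ) - 1) / 2) * (3 * ω + π P)) • g - (((n : ℝ) - 1) / 4) • ππ) :
    Ric0 = (trG g hg Ric0 / (n : ℝ)) • g ↔
      Ric = ((1 / (4 * (n : ℝ))) * (4 * trG g hg Ric - ((n : ℝ) - 1) * π P)) • g
        + (((n : ℝ) - 1) / 4) • ππ := by
  have hn0 : (n : ℝ) ≠ 0 := by exact_mod_cast (by omega : n ≠ 0)
  have hπg : π = g P := by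
    rw [hπ]
    exact LinearMap.ext fun X ↦ hgs.eq X P
  have htrππ : trG g hg ππ = π P := by
    rw [hππ, hπg, trG_smulRight]
  have hcoef : trG g hg Ric0 / n
      = (1 / (4 * (n : ℝ))) * (4 * trG g hg Ric - ((n : ℝ) - 1) * π P)
        - (((n : ℝ) - 1) / 2) * (3 * ω + π P) := by
    rw [hRic0, trG_sub, trG_sub, trG_smul, trG_smul, trG_self, hdim, htrππ]
    field_simp
    ring
  rw [hcoef, hRic0]
  refine (sub_smul_sub_smul_eq_smul_iff Ric g ππ _ _ _).trans ?_
  rw [sub_add_cancel]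

theorem stmt_4 {V : Type*} [AddCommGroup V] [Module ℝ V] [FiniteDimensional ℝ V]
    (n : ℕ) (hn : 3 ≤ n) (hdim : Module.finrank ℝ V = n)
    (g : LinearMap.BilinForm ℝ V) (hg : g.Nondegenerate) (hgs : g.IsSymm)
    (P : V) (π : V →ₗ[ℝ] ℝ) (hπ : π = g.flip P) (ω : ℝ)
    (ππ : LinearMap.BilinForm ℝ V) (hππ : ππ = π.smulRight π)
    (Ric : LinearMap.BilinForm ℝ V) (hRicSymm : Ric.IsSymm)
    (Ric0 : LinearMap.BilinForm ℝ V)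
    (hRic0 : Ric0 = Ric - ((((n : ℝ) - 1) / 2) * (3 * ω + π P)) • g - (((n : ℝ) - 1) / 4) • ππ) :
    Ric0 = (trG g hg Ric0 / (n : ℝ)) • g ↔
      Ric = ((1 / (4 * (n : ℝ))) * (4 * trG g hg Ric - ((n : ℝ) - 1) * π P)) • g
        + (((n : ℝ) - 1) / 4) • ππ :=
  stmt_4_general n hn hdim g hg hgs P π hπ ω ππ hππ Ric Ric0 hRic0
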